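/- arXiv:1107.0745 — 5 statements merged into one kernel-verified Lean document; each statement's English description precedes it below -/
import Mathlib

section
/- There exist constants c₁, c₂ > 0 such that for all x ∈ (0, 1], c₁ / (x · (log(4/x))^{3/2}) ≤ ∫₂^∞ e^{-xξ} / (log ξ)^{3/2} dξ ≤ c₂ / (x · (log(4/x))^{3/2}). -/
/-!
Put `y = 4/x` and `L = log y`. From below, the integrand is at least `e⁻⁸ / (2L)^{3/2}` on
`(y, 2y]`, an interval of length `y`. From above, split at `√y`: on `(2, √y]` the integrand is
at most `1 / (log 2)^{3/2}`, and `√y ≲ y / L^{3/2}` because `log` grows slower than any power;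
on `(√y, ∞)` we have `log ξ ≥ L/2`, so the tail is at most `(2/L)^{3/2} ∫ e^{-xξ} dξ`.
-/

open MeasureTheory Set Real

section

variable {p x : ℝ}

lemma exp_div_log_rpow_le_of_le (hp : 0 ≤ p) {a ξ : ℝ} (ha : 1 < a) (haξ : a ≤ ξ) :
    exp (-(x * ξ)) / log ξ ^ p ≤ exp (-(x * ξ)) / log a ^ p := by
  have hloga : 0 < log a := log_pos ha
  gcongr

lemma integrableOn_exp_div_log_rpow_Ioi (hx : 0 < x) (hp : 0 ≤ p) {a : ℝ} (ha : 1 < a) :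
    IntegrableOn (fun ξ ↦ exp (-(x * ξ)) / log ξ ^ p) (Ioi a) := by
  refine Integrable.mono' ((integrableOn_exp_mul_Ioi (neg_lt_zero.2 hx) a).div_const (log a ^ p))
    (by fun_prop : Measurable _).aestronglyMeasurable ?_
  filter_upwards [ae_restrict_mem measurableSet_Ioi] with ξ (hξ : a < ξ)
  have hlogξ : 0 ≤ log ξ := log_nonneg (by linarith)
  rw [norm_of_nonneg (by positivity), neg_mul]
  exact exp_div_log_rpow_le_of_le hp ha hξ.le

lemma setIntegral_exp_div_log_rpow_Ioi_le (hx : 0 < x) (hp : 0 ≤ p) {a : ℝ} (ha : 1 < a) :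
    ∫ ξ in Ioi a, exp (-(x * ξ)) / log ξ ^ p ≤ exp (-(x * a)) / (x * log a ^ p) := by
  calc ∫ ξ in Ioi a, exp (-(x * ξ)) / log ξ ^ p
      ≤ ∫ ξ in Ioi a, exp (-x * ξ) / log a ^ p := by
        refine setIntegral_mono_on (integrableOn_exp_div_log_rpow_Ioi hx hp ha)
          ((integrableOn_exp_mul_Ioi (neg_lt_zero.2 hx) a).div_const _) measurableSet_Ioi
          fun ξ hξ ↦ ?_
        rw [neg_mul]
        exact exp_div_log_rpow_le_of_le hp ha (le_of_lt hξ)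
    _ = exp (-(x * a)) / (x * log a ^ p) := by
        rw [integral_div, integral_exp_mul_Ioi (neg_lt_zero.2 hx), neg_mul, neg_div_neg_eq,
          div_div]

lemma setIntegral_exp_div_log_rpow_Ioc_le (hx : 0 ≤ x) (hp : 0 ≤ p) {a b : ℝ} (ha : 1 < a)
    (hab : a ≤ b) :
    ∫ ξ in Ioc a b, exp (-(x * ξ)) / log ξ ^ p ≤ (b - a) / log a ^ p := by
  have hbound : ∀ ξ ∈ Ioc a b, ‖exp (-(x * ξ)) / log ξ ^ p‖ ≤ 1 / log a ^ p := fun ξ hξ ↦ by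
    have haξ : a < ξ := hξ.1
    have hlogξ : 0 ≤ log ξ := log_nonneg (by linarith)
    have hexp : exp (-(x * ξ)) ≤ 1 := exp_le_one_iff.2 (by nlinarith)
    calc ‖exp (-(x * ξ)) / log ξ ^ p‖ = exp (-(x * ξ)) / log ξ ^ p :=
          norm_of_nonneg (by positivity)
      _ ≤ exp (-(x * ξ)) / log a ^ p := exp_div_log_rpow_le_of_le hp ha hξ.1.le
      _ ≤ 1 / log a ^ p := by have := log_pos ha; gcongr
  calc ∫ ξ in Ioc a b, exp (-(x * ξ)) / log ξ ^ p
      ≤ ‖∫ ξ in Ioc a b, exp (-(x * ξ)) / log ξ ^ p‖ := le_norm_self _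
    _ ≤ 1 / log a ^ p * volume.real (Ioc a b) :=
        norm_setIntegral_le_of_norm_le_const measure_Ioc_lt_top hbound
    _ = (b - a) / log a ^ p := by rw [volume_real_Ioc_of_le hab]; ring

lemma mul_exp_div_log_rpow_le_setIntegral (hx : 0 < x) (hp : 0 ≤ p) {a b c : ℝ} (ha : 1 < a)
    (hab : a ≤ b) (hbc : b ≤ c) :
    (c - b) * (exp (-(x * c)) / log c ^ p) ≤ ∫ ξ in Ioi a, exp (-(x * ξ)) / log ξ ^ p := by
  have hint := integrableOn_exp_div_log_rpow_Ioi hx hp ha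
  have hsub : Ioc b c ⊆ Ioi a := fun ξ hξ ↦ lt_of_le_of_lt hab hξ.1
  have hbound : ∀ ξ ∈ Ioc b c, exp (-(x * c)) / log c ^ p ≤ exp (-(x * ξ)) / log ξ ^ p :=
    fun ξ ⟨hbξ, hξc⟩ ↦ by
      have hlogξ : 0 < log ξ := log_pos (by linarith)
      have hlogξc : log ξ ≤ log c := log_le_log (by linarith) hξc
      gcongr
  have hnonneg : 0 ≤ᵐ[volume.restrict (Ioi a)] fun ξ ↦ exp (-(x * ξ)) / log ξ ^ p := by
    filter_upwards [ae_restrict_mem measurableSet_Ioi] with ξ (hξ : a < ξ)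
    have hlogξ : 0 ≤ log ξ := log_nonneg (by linarith)
    positivity
  calc (c - b) * (exp (-(x * c)) / log c ^ p)
      = exp (-(x * c)) / log c ^ p * volume.real (Ioc b c) := by
        rw [volume_real_Ioc_of_le hbc, mul_comm]
    _ ≤ ∫ ξ in Ioc b c, exp (-(x * ξ)) / log ξ ^ p :=
        setIntegral_ge_of_const_le_real measurableSet_Ioc measure_Ioc_lt_top.ne hbound
          (hint.mono_set hsub)
    _ ≤ ∫ ξ in Ioi a, exp (-(x * ξ)) / log ξ ^ p :=
        setIntegral_mono_set hint hnonneg hsub.eventuallyLE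

lemma sqrt_mul_log_rpow_le (hp : 0 < p) {y : ℝ} (hy : 1 ≤ y) :
    √y * log y ^ p ≤ (2 * p) ^ p * y := by
  have hy0 : 0 ≤ y := by linarith
  have hlog : log y ≤ 2 * p * y ^ (1 / (2 * p)) := by
    simpa [div_eq_mul_inv, mul_comm] using log_le_rpow_div hy0 (by positivity : 0 < 1 / (2 * p))
  have hlog_rpow : log y ^ p ≤ (2 * p) ^ p * √y := by
    calc log y ^ p ≤ (2 * p * y ^ (1 / (2 * p))) ^ p := by
          gcongr; exact log_nonneg hy
      _ = (2 * p) ^ p * √y := by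
          rw [mul_rpow (by positivity) (by positivity), ← rpow_mul hy0, sqrt_eq_rpow]
          field_simp
  calc √y * log y ^ p ≤ √y * ((2 * p) ^ p * √y) := by gcongr
    _ = (2 * p) ^ p * y := by rw [mul_left_comm, mul_self_sqrt hy0]

lemma div_le_integral_exp_div_log_rpow (hp : 0 ≤ p) (hx : 0 < x) (hx1 : x ≤ 1) :
    4 * exp (-8) / 2 ^ p / (x * log (4 / x) ^ p) ≤
      ∫ ξ in Ioi 2, exp (-(x * ξ)) / log ξ ^ p := by
  set y := 4 / x with hy_def
  have hy : 4 ≤ y := by rw [le_div_iff₀ hx]; linarith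
  have hxy : x * y = 4 := by rw [hy_def]; field_simp
  have hlog2 : log 2 ≤ log y := log_le_log two_pos (by linarith)
  have hlog2y : log (2 * y) ≤ 2 * log y := by
    rw [log_mul two_ne_zero (by positivity)]; linarith
  have hlog2y_pos : 0 < log (2 * y) := log_pos (by linarith)
  have hlogy : 0 < log y := log_pos (by linarith)
  calc 4 * exp (-8) / 2 ^ p / (x * log y ^ p) = y * (exp (-8) / (2 * log y) ^ p) := by
        rw [mul_rpow zero_le_two hlogy.le, ← hxy]
        field_simp
    _ ≤ y * (exp (-(x * (2 * y))) / log (2 * y) ^ p) := by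
        rw [mul_left_comm, hxy]; gcongr; norm_num
    _ = (2 * y - y) * (exp (-(x * (2 * y))) / log (2 * y) ^ p) := by ring
    _ ≤ ∫ ξ in Ioi 2, exp (-(x * ξ)) / log ξ ^ p :=
        mul_exp_div_log_rpow_le_setIntegral hx hp one_lt_two (by linarith) (by linarith)

lemma integral_exp_div_log_rpow_le_div (hp : 0 < p) (hx : 0 < x) (hx1 : x ≤ 1) :
    ∫ ξ in Ioi 2, exp (-(x * ξ)) / log ξ ^ p ≤
      (4 * (2 * p) ^ p / log 2 ^ p + 2 ^ p) / (x * log (4 / x) ^ p) := by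
  set y := 4 / x with hy_def
  have hy : 4 ≤ y := by rw [le_div_iff₀ hx]; linarith
  have hxy : x * y = 4 := by rw [hy_def]; field_simp
  have hlog2 : 0 < log 2 := log_pos one_lt_two
  have hlogy : 0 < log y := log_pos (by linarith)
  have hsqrt : 2 ≤ √y := (le_sqrt zero_le_two (by linarith)).2 (by linarith)
  have hint := integrableOn_exp_div_log_rpow_Ioi hx hp.le one_lt_two
  have hsplit : ∫ ξ in Ioi 2, exp (-(x * ξ)) / log ξ ^ p =
      (∫ ξ in Ioc 2 √y, exp (-(x * ξ)) / log ξ ^ p) +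
        ∫ ξ in Ioi √y, exp (-(x * ξ)) / log ξ ^ p := by
    rw [← Ioc_union_Ioi_eq_Ioi hsqrt]
    exact setIntegral_union (Ioc_disjoint_Ioi le_rfl) measurableSet_Ioi
      (hint.mono_set Ioc_subset_Ioi_self) (hint.mono_set (Ioi_subset_Ioi hsqrt))
  have hnear : ∫ ξ in Ioc 2 √y, exp (-(x * ξ)) / log ξ ^ p ≤
      4 * (2 * p) ^ p / log 2 ^ p / (x * log y ^ p) := by
    calc ∫ ξ in Ioc 2 √y, exp (-(x * ξ)) / log ξ ^ p
        ≤ (√y - 2) / log 2 ^ p := setIntegral_exp_div_log_rpow_Ioc_le hx.le hp.le one_lt_two hsqrt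
      _ ≤ √y / log 2 ^ p := by gcongr; linarith
      _ ≤ 4 * (2 * p) ^ p / log 2 ^ p / (x * log y ^ p) := by
        rw [le_div_iff₀ (by positivity)]
        calc √y / log 2 ^ p * (x * log y ^ p) = x * (√y * log y ^ p) / log 2 ^ p := by ring
          _ ≤ x * ((2 * p) ^ p * y) / log 2 ^ p := by
            gcongr x * ?_ / _
            exact sqrt_mul_log_rpow_le hp (by linarith)
          _ = 4 * (2 * p) ^ p / log 2 ^ p := by rw [← hxy]; ring
  have hfar : ∫ ξ in Ioi √y, exp (-(x * ξ)) / log ξ ^ p ≤ 2 ^ p / (x * log y ^ p) := by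
    calc ∫ ξ in Ioi √y, exp (-(x * ξ)) / log ξ ^ p
        ≤ exp (-(x * √y)) / (x * log √y ^ p) :=
          setIntegral_exp_div_log_rpow_Ioi_le hx hp.le (by linarith)
      _ ≤ 1 / (x * (log y / 2) ^ p) := by
          rw [log_sqrt (by linarith)]
          gcongr
          exact exp_le_one_iff.2 (by nlinarith)
      _ = 2 ^ p / (x * log y ^ p) := by
          rw [div_rpow hlogy.le zero_le_two]
          field_simp
  rw [hsplit, add_div]
  exact add_le_add hnear hfar

end

/-- `∫₂^∞ e^{-xξ}/(log ξ)^{3/2} dξ ≈ 1/(x·(log(4/x))^{3/2})` for `x ∈ (0,1]`. -/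
theorem integral_exp_div_log_rpow_comp :
    ∃ c₁ > (0:ℝ), ∃ c₂ > (0:ℝ), ∀ x : ℝ, 0 < x → x ≤ 1 →
      c₁ / (x * (Real.log (4/x)) ^ ((3:ℝ)/2)) ≤
        (∫ ξ in Set.Ioi (2:ℝ), Real.exp (-(x*ξ)) / (Real.log ξ) ^ ((3:ℝ)/2)) ∧
      (∫ ξ in Set.Ioi (2:ℝ), Real.exp (-(x*ξ)) / (Real.log ξ) ^ ((3:ℝ)/2)) ≤
        c₂ / (x * (Real.log (4/x)) ^ ((3:ℝ)/2)) := by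
  have hlog2 : 0 < log 2 := log_pos one_lt_two
  refine ⟨4 * exp (-8) / 2 ^ ((3:ℝ)/2), by positivity,
    4 * (2 * (3/2)) ^ ((3:ℝ)/2) / log 2 ^ ((3:ℝ)/2) + 2 ^ ((3:ℝ)/2), by positivity,
    fun x hx hx1 ↦ ⟨div_le_integral_exp_div_log_rpow (by norm_num) hx hx1,
      integral_exp_div_log_rpow_le_div (by norm_num) hx hx1⟩⟩
end

section
/- Let V : (0,∞) → (0,∞) satisfy c₁ ≤ V(x)·(log(1+x^{-α}))^{1/2} ≤ c₂ and c₁ ≤ V'(x)·x·(log(1+x^{-α/3}))^{3/2} ≤ c₂ for all x > 0, where 0 < α ≤ 2. Then there are constants c₃,c₄ > 0 such that for all x > 0, c₃ · V(x)/(x·log(2 + 1/x)) ≤ V'(x) ≤ c₄ · V(x)/(x·log(2 + 1/x)). -/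
/-!
Put `u = x^{-α/3}` and `ℓ = log (1 + u)`, so that `log (1 + x^{-α}) = log (1 + u³)`.
Comparing `u³` with `ℓ³` when `u ≤ 1`, and `log (1 + u³)` with `ℓ` when `u ≥ 1`, gives
`log (1 + u³) ≍ ℓ³ / (1 + ℓ)²`, while `log (2 + 1/x) ≍ 1 + ℓ` with constants depending on
`α`. Hence `log (2 + 1/x) · log (1 + x^{-α})^{1/2} ≍ ℓ^{3/2}`, which is exactly the factor
relating the given two-sided bounds on `V` and on `V'` to the claimed one.
-/

open Real

lemma log_one_add_le_self {u : ℝ} (hu : 0 ≤ u) : log (1 + u) ≤ u := by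
  linarith [log_le_sub_one_of_pos (by linarith : 0 < 1 + u)]

lemma log_one_add_pow_three_le {u : ℝ} (hu : 0 ≤ u) :
    log (1 + u) ^ 3 ≤ 4 * (log (1 + u ^ 3) * (1 + log (1 + u)) ^ 2) := by
  set ℓ := log (1 + u)
  set M := log (1 + u ^ 3)
  have hℓ : 0 ≤ ℓ := log_nonneg (by linarith)
  have hM : 0 ≤ M := log_nonneg (le_add_of_nonneg_right (by positivity))
  have hM1 : M ≤ M * (1 + ℓ) ^ 2 := le_mul_of_one_le_right hM (one_le_pow₀ (by linarith))
  rcases le_total u 1 with hu1 | hu1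
  · have hMu : u ^ 3 / 2 ≤ M := calc
      u ^ 3 / 2 ≤ 2 * u ^ 3 / (u ^ 3 + 2) := by
        rw [div_le_div_iff₀ (by norm_num) (by positivity)]
        nlinarith [pow_nonneg hu 3, pow_le_one₀ (n := 3) hu hu1]
      _ ≤ M := le_log_one_add_of_nonneg (by positivity)
    calc ℓ ^ 3 ≤ u ^ 3 := pow_le_pow_left₀ hℓ (log_one_add_le_self hu) 3
      _ ≤ 4 * (M * (1 + ℓ) ^ 2) := by linarith
  · have hℓM : ℓ ≤ M :=
      log_le_log (by linarith) (by nlinarith [pow_le_pow_right₀ hu1 (show 1 ≤ 3 by norm_num)])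
    calc ℓ ^ 3 = ℓ * ℓ ^ 2 := by ring
      _ ≤ M * (1 + ℓ) ^ 2 := mul_le_mul hℓM (by nlinarith) (sq_nonneg ℓ) hM
      _ ≤ 4 * (M * (1 + ℓ) ^ 2) := by linarith

lemma log_one_add_cube_mul_sq_le {u : ℝ} (hu : 0 ≤ u) :
    log (1 + u ^ 3) * (1 + log (1 + u)) ^ 2 ≤ 36 * log (1 + u) ^ 3 := by
  set ℓ := log (1 + u)
  set M := log (1 + u ^ 3)
  have hℓ : 0 ≤ ℓ := log_nonneg (by linarith)
  rcases le_total u 1 with hu1 | hu1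
  · have huℓ : u / 2 ≤ ℓ := calc
      u / 2 ≤ 2 * u / (u + 2) := by
        rw [div_le_div_iff₀ (by norm_num) (by positivity)]; nlinarith
      _ ≤ ℓ := le_log_one_add_of_nonneg hu
    have hℓ1 : ℓ ≤ 1 := (log_one_add_le_self hu).trans hu1
    calc M * (1 + ℓ) ^ 2 ≤ u ^ 3 * 2 ^ 2 := by
          gcongr
          · exact log_one_add_le_self (by positivity)
          · linarith
      _ = 4 * (2 * (u / 2)) ^ 3 := by ring
      _ ≤ 4 * (2 * ℓ) ^ 3 := by gcongr
      _ ≤ 36 * ℓ ^ 3 := by nlinarith [pow_nonneg hℓ 3]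
  · have hM3 : M ≤ 3 * ℓ := calc
      M ≤ log ((1 + u) ^ 3) := log_le_log (by positivity) (by nlinarith [sq_nonneg u])
      _ = 3 * ℓ := by rw [log_pow]; norm_num [ℓ]
    have hℓ2 : 1 / 2 ≤ ℓ := by
      have := log_le_log (by norm_num : (0:ℝ) < 2) (by linarith : (2:ℝ) ≤ 1 + u)
      linarith [log_two_gt_d9]
    calc M * (1 + ℓ) ^ 2 ≤ (3 * ℓ) * (3 * ℓ) ^ 2 := by gcongr; linarith
      _ ≤ 36 * ℓ ^ 3 := by nlinarith [pow_nonneg hℓ 3]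

lemma log_two_le_log_two_add_inv {x : ℝ} (hx : 0 < x) : log 2 ≤ log (2 + 1 / x) :=
  log_le_log two_pos (by simp [hx.le])

lemma log_one_add_rpow_neg_le {a x : ℝ} (ha : 0 < a) (hx : 0 < x) :
    log (1 + x ^ (-a)) ≤ log 2 + a * log (2 + 1 / x) := by
  have hy : 0 < 2 + 1 / x := by positivity
  have h : 1 + x ^ (-a) ≤ 2 * (2 + 1 / x) ^ a := by
    have h1 : 1 ≤ (2 + 1 / x) ^ a := one_le_rpow (by linarith [one_div_pos.mpr hx]) ha.le
    have h2 : x ^ (-a) ≤ (2 + 1 / x) ^ a := by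
      rw [rpow_neg hx.le, ← inv_rpow hx.le, ← one_div]
      exact rpow_le_rpow (by positivity) (by linarith) ha.le
    linarith
  calc log (1 + x ^ (-a)) ≤ log (2 * (2 + 1 / x) ^ a) := log_le_log (by positivity) h
    _ = log 2 + a * log (2 + 1 / x) := by
      rw [log_mul two_ne_zero (by positivity), log_rpow hy]

lemma one_add_log_one_add_rpow_neg_le {a x : ℝ} (ha : 0 < a) (hx : 0 < x) :
    1 + log (1 + x ^ (-a)) ≤ (1 / log 2 + 1 + a) * log (2 + 1 / x) := by
  have hG := log_two_le_log_two_add_inv hx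
  have hℓ := log_one_add_rpow_neg_le ha hx
  have h1 : 1 ≤ log (2 + 1 / x) / log 2 := (one_le_div (log_pos one_lt_two)).mpr hG
  rw [add_mul, add_mul, one_div_mul_eq_div]
  linarith

lemma log_two_add_inv_le {a x : ℝ} (ha : 0 < a) (hx : 0 < x) :
    log (2 + 1 / x) ≤ (log 3 + 1 / a) * (1 + log (1 + x ^ (-a))) := by
  have hℓ : 0 ≤ log (1 + x ^ (-a)) := log_nonneg (le_add_of_nonneg_right (by positivity))
  have h3 : 0 ≤ log 3 := log_nonneg (by norm_num)
  have ha' : 0 < 1 / a := one_div_pos.mpr ha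
  suffices h : log (2 + 1 / x) ≤ log 3 + 1 / a * log (1 + x ^ (-a)) by
    nlinarith [mul_nonneg h3 hℓ]
  rcases le_total 1 x with hx1 | hx1
  · have : log (2 + 1 / x) ≤ log 3 :=
      log_le_log (by positivity) (by linarith [(div_le_one hx).mpr hx1])
    nlinarith [mul_nonneg ha'.le hℓ]
  · have hG : log (2 + 1 / x) ≤ log 3 - log x := by
      rw [← log_div three_ne_zero hx.ne']
      refine log_le_log (by positivity) ?_
      rw [le_div_iff₀ hx, add_mul, one_div_mul_cancel hx.ne']
      linarith
    have hℓx : -a * log x ≤ log (1 + x ^ (-a)) := by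
      rw [← log_rpow hx]
      exact log_le_log (by positivity) (by linarith)
    have : -log x ≤ 1 / a * log (1 + x ^ (-a)) := by
      rw [one_div_mul_eq_div, le_div_iff₀ ha]; linarith
    linarith

lemma sq_rpow_three_halves {y : ℝ} (hy : 0 ≤ y) : (y ^ ((3:ℝ) / 2)) ^ 2 = y ^ 3 := by
  rw [← rpow_mul_natCast hy]; norm_num

lemma sq_rpow_half {y : ℝ} (hy : 0 ≤ y) : (y ^ ((1:ℝ) / 2)) ^ 2 = y := by
  rw [← sqrt_eq_rpow, sq_sqrt hy]

lemma log_one_add_rpow_three_halves_le {u : ℝ} (hu : 0 ≤ u) :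
    log (1 + u) ^ ((3:ℝ) / 2) ≤ 2 * (log (1 + u ^ 3) ^ ((1:ℝ) / 2) * (1 + log (1 + u))) := by
  have hℓ : 0 ≤ log (1 + u) := log_nonneg (by linarith)
  have hM : 0 ≤ log (1 + u ^ 3) := log_nonneg (le_add_of_nonneg_right (by positivity))
  refine (pow_le_pow_iff_left₀ (by positivity) (by positivity) two_ne_zero).mp ?_
  rw [mul_pow, mul_pow, sq_rpow_three_halves hℓ, sq_rpow_half hM]
  linarith [log_one_add_pow_three_le hu]

lemma log_one_add_cube_rpow_half_mul_le {u : ℝ} (hu : 0 ≤ u) :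
    log (1 + u ^ 3) ^ ((1:ℝ) / 2) * (1 + log (1 + u)) ≤ 6 * log (1 + u) ^ ((3:ℝ) / 2) := by
  have hℓ : 0 ≤ log (1 + u) := log_nonneg (by linarith)
  have hM : 0 ≤ log (1 + u ^ 3) := log_nonneg (le_add_of_nonneg_right (by positivity))
  refine (pow_le_pow_iff_left₀ (by positivity) (by positivity) two_ne_zero).mp ?_
  rw [mul_pow, mul_pow, sq_rpow_three_halves hℓ, sq_rpow_half hM]
  linarith [log_one_add_cube_mul_sq_le hu]

lemma rpow_neg_div_three_pow_three (α : ℝ) {x : ℝ} (hx : 0 ≤ x) :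
    (x ^ (-(α / 3))) ^ 3 = x ^ (-α) := by
  rw [← rpow_mul_natCast hx]; ring_nf

lemma rpow_three_halves_le_log_two_add_inv_mul {α x : ℝ} (hα : 0 < α) (hx : 0 < x) :
    log (1 + x ^ (-(α / 3))) ^ ((3:ℝ) / 2) ≤
      2 * (1 / log 2 + 1 + α / 3) * (log (2 + 1 / x) * log (1 + x ^ (-α)) ^ ((1:ℝ) / 2)) := by
  have h := log_one_add_rpow_three_halves_le (rpow_nonneg hx.le (-(α / 3)))
  rw [rpow_neg_div_three_pow_three α hx.le] at h
  have hG := one_add_log_one_add_rpow_neg_le (div_pos hα three_pos) hx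
  have hM : 0 ≤ log (1 + x ^ (-α)) ^ ((1:ℝ) / 2) :=
    rpow_nonneg (log_nonneg (le_add_of_nonneg_right (by positivity))) _
  calc _ ≤ _ := h
    _ ≤ 2 * (log (1 + x ^ (-α)) ^ ((1:ℝ) / 2) *
          ((1 / log 2 + 1 + α / 3) * log (2 + 1 / x))) := by gcongr
    _ = _ := by ring

lemma log_two_add_inv_mul_le {α x : ℝ} (hα : 0 < α) (hx : 0 < x) :
    log (2 + 1 / x) * log (1 + x ^ (-α)) ^ ((1:ℝ) / 2) ≤
      6 * (log 3 + 1 / (α / 3)) * log (1 + x ^ (-(α / 3))) ^ ((3:ℝ) / 2) := by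
  have h := log_one_add_cube_rpow_half_mul_le (rpow_nonneg hx.le (-(α / 3)))
  rw [rpow_neg_div_three_pow_three α hx.le] at h
  have hG := log_two_add_inv_le (div_pos hα three_pos) hx
  have hM : 0 ≤ log (1 + x ^ (-α)) ^ ((1:ℝ) / 2) :=
    rpow_nonneg (log_nonneg (le_add_of_nonneg_right (by positivity))) _
  calc _ ≤ (log 3 + 1 / (α / 3)) * (1 + log (1 + x ^ (-(α / 3)))) *
          log (1 + x ^ (-α)) ^ ((1:ℝ) / 2) := by gcongr
    _ ≤ (log 3 + 1 / (α / 3)) * (6 * log (1 + x ^ (-(α / 3))) ^ ((3:ℝ) / 2)) := by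
      rw [mul_assoc, mul_comm (1 + _)]
      gcongr
    _ = _ := by ring

lemma div_mul_mem_Icc {P Q S c₁ c₂ s₁ s₂ : ℝ} (hc₁ : 0 < c₁) (hs₁ : 0 ≤ s₁)
    (hP : P ∈ Set.Icc c₁ c₂) (hQ : Q ∈ Set.Icc c₁ c₂) (hS : S ∈ Set.Icc s₁ s₂) :
    P / Q * S ∈ Set.Icc (c₁ / c₂ * s₁) (c₂ / c₁ * s₂) := by
  obtain ⟨hP₁, hP₂⟩ := hP
  obtain ⟨hQ₁, hQ₂⟩ := hQ
  obtain ⟨hS₁, hS₂⟩ := hS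
  have hQ : 0 < Q := hc₁.trans_le hQ₁
  have hc₂ : 0 < c₂ := hQ.trans_le hQ₂
  have hP : 0 < P := hc₁.trans_le hP₁
  exact ⟨mul_le_mul (div_le_div₀ hP.le hP₁ hQ hQ₂) hS₁ hs₁ (div_pos hP hQ).le,
    mul_le_mul (div_le_div₀ hc₂.le hP₂ hc₁ hQ₁) hS₂ (hs₁.trans hS₁) (by positivity)⟩

theorem deriv_renewal_comp_general (α : ℝ) (hα : 0 < α)
    (V Vp : ℝ → ℝ) (c₁ c₂ : ℝ) (hc₁ : 0 < c₁) (hc₂ : 0 < c₂)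
    (hV : ∀ x : ℝ, 0 < x →
      c₁ ≤ V x * (Real.log (1 + x ^ (-α))) ^ ((1:ℝ)/2) ∧
      V x * (Real.log (1 + x ^ (-α))) ^ ((1:ℝ)/2) ≤ c₂)
    (hVp : ∀ x : ℝ, 0 < x →
      c₁ ≤ Vp x * x * (Real.log (1 + x ^ (-(α/3)))) ^ ((3:ℝ)/2) ∧
      Vp x * x * (Real.log (1 + x ^ (-(α/3)))) ^ ((3:ℝ)/2) ≤ c₂) :
    ∃ c₃ > (0:ℝ), ∃ c₄ > (0:ℝ), ∀ x : ℝ, 0 < x →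
      c₃ * (V x / (x * Real.log (2 + 1/x))) ≤ Vp x ∧
      Vp x ≤ c₄ * (V x / (x * Real.log (2 + 1/x))) := by
  have hA : 0 < 2 * (1 / log 2 + 1 + α / 3) := by have := log_pos one_lt_two; positivity
  refine ⟨c₁ / c₂ * (1 / (2 * (1 / log 2 + 1 + α / 3))), by positivity,
    c₂ / c₁ * (6 * (log 3 + 1 / (α / 3))), by positivity, fun x hx => ?_⟩
  set G := log (2 + 1 / x)
  set p := log (1 + x ^ (-(α / 3))) ^ ((3:ℝ) / 2)
  set q := log (1 + x ^ (-α)) ^ ((1:ℝ) / 2)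
  have hG : 0 < G := (log_pos one_lt_two).trans_le (log_two_le_log_two_add_inv hx)
  have hp : 0 < p := rpow_pos_of_pos (log_pos (by simp [rpow_pos_of_pos hx])) _
  have hq : 0 < q := rpow_pos_of_pos (log_pos (by simp [rpow_pos_of_pos hx])) _
  have hVx : 0 < V x := pos_of_mul_pos_left (hc₁.trans_le (hV x hx).1) hq.le
  have hS : G * q / p ∈
      Set.Icc (1 / (2 * (1 / log 2 + 1 + α / 3))) (6 * (log 3 + 1 / (α / 3))) :=
    ⟨by rw [div_le_div_iff₀ hA hp]; linarith [rpow_three_halves_le_log_two_add_inv_mul hα hx],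
      (div_le_iff₀ hp).mpr (log_two_add_inv_mul_le hα hx)⟩
  have hR := div_mul_mem_Icc hc₁ (by positivity) (hVp x hx) (hV x hx) hS
  have hVp_eq : Vp x = Vp x * x * p / (V x * q) * (G * q / p) * (V x / (x * G)) := by
    field_simp
  have hw : 0 ≤ V x / (x * G) := by positivity
  rw [hVp_eq]
  exact ⟨mul_le_mul_of_nonneg_right hR.1 hw, mul_le_mul_of_nonneg_right hR.2 hw⟩

/-- From `V(x) ≈ (log(1+x^{-α}))^{-1/2}` and `V'(x) ≈ 1/(x (log(1+x^{-α/3}))^{3/2})`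
one deduces `V'(x) ≈ V(x)/(x log(2+1/x))`. -/
theorem deriv_renewal_comp (α : ℝ) (hα : 0 < α) (hα2 : α ≤ 2)
    (V Vp : ℝ → ℝ) (c₁ c₂ : ℝ) (hc₁ : 0 < c₁) (hc₂ : 0 < c₂)
    (hderiv : ∀ x : ℝ, 0 < x → HasDerivAt V (Vp x) x)
    (hV : ∀ x : ℝ, 0 < x →
      c₁ ≤ V x * (Real.log (1 + x ^ (-α))) ^ ((1:ℝ)/2) ∧
      V x * (Real.log (1 + x ^ (-α))) ^ ((1:ℝ)/2) ≤ c₂)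
    (hVp : ∀ x : ℝ, 0 < x →
      c₁ ≤ Vp x * x * (Real.log (1 + x ^ (-(α/3)))) ^ ((3:ℝ)/2) ∧
      Vp x * x * (Real.log (1 + x ^ (-(α/3)))) ^ ((3:ℝ)/2) ≤ c₂) :
    ∃ c₃ > (0:ℝ), ∃ c₄ > (0:ℝ), ∀ x : ℝ, 0 < x →
      c₃ * (V x / (x * Real.log (2 + 1/x))) ≤ Vp x ∧
      Vp x ≤ c₄ * (V x / (x * Real.log (2 + 1/x))) :=
  deriv_renewal_comp_general α hα V Vp c₁ c₂ hc₁ hc₂ hV hVp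
end

section
/- There exist constants c₁, c₂ > 0 such that for every r ∈ (0,1], c₁ · (log(1+1/r))^{-1} ≤ ∫_r^{3r/2} (1/((y−r)·(log(1+1/(y−r)))²)) dy ≤ c₂ · (log(1+1/r))^{-1}. -/
open MeasureTheory Set Filter Topology Real

/-!
`V u = 1 / log (1 + 1/u)` satisfies `V' u = 1 / (u (u + 1) log² (1 + 1/u))`, so the integrand,
shifted to `(0, r/2)`, is `(1 + u) V' u` with `1 ≤ 1 + u ≤ 3/2`: the integral lies between
`V (r/2)` and `3/2 · V (r/2)`. Finally `V (r/2)` is comparable to `V r`, because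
`1 + 2/r ≤ (1 + 1/r)²` gives `log (1 + 2/r) ≤ 2 log (1 + 1/r)`.
-/

/-- The junk value `invLogOneAddInv 0 = 0` is also its limit at `0⁺`. -/
noncomputable def invLogOneAddInv (u : ℝ) : ℝ := (log (1 + 1 / u))⁻¹

lemma log_one_add_one_div_pos {u : ℝ} (hu : 0 < u) : 0 < log (1 + 1 / u) :=
  log_pos (by have := one_div_pos.2 hu; linarith)

lemma invLogOneAddInv_pos {u : ℝ} (hu : 0 < u) : 0 < invLogOneAddInv u :=
  inv_pos.2 (log_one_add_one_div_pos hu)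

lemma hasDerivAt_invLogOneAddInv {u : ℝ} (hu : 0 < u) :
    HasDerivAt invLogOneAddInv (1 / (u * (u + 1) * log (1 + 1 / u) ^ 2)) u := by
  have hlog : HasDerivAt (fun v => log (1 + 1 / v)) (-(1 / u ^ 2) / (1 + 1 / u)) u := by
    have h := (hasDerivAt_inv hu.ne').const_add 1
    simp only [one_div] at h ⊢
    exact h.log (add_pos one_pos (inv_pos.2 hu)).ne'
  refine (hlog.inv (log_one_add_one_div_pos hu).ne').congr_deriv ?_
  field_simp

lemma tendsto_invLogOneAddInv_nhdsGT_zero : Tendsto invLogOneAddInv (𝓝[>] 0) (𝓝 0) := by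
  have h : Tendsto (fun u : ℝ => 1 + 1 / u) (𝓝[>] 0) atTop :=
    tendsto_atTop_add_const_left _ 1 (tendsto_inv_nhdsGT_zero.congr fun u => (one_div u).symm)
  exact (tendsto_log_atTop.comp h).inv_tendsto_atTop

lemma continuousOn_invLogOneAddInv : ContinuousOn invLogOneAddInv (Ici 0) := by
  intro u hu
  rcases (mem_Ici.1 hu).eq_or_lt with rfl | hu
  · rw [← continuousWithinAt_Ioi_iff_Ici, ContinuousWithinAt]
    simpa [invLogOneAddInv] using tendsto_invLogOneAddInv_nhdsGT_zero
  · exact (hasDerivAt_invLogOneAddInv hu).continuousAt.continuousWithinAt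

lemma intervalIntegrable_deriv_invLogOneAddInv {a : ℝ} (ha : 0 ≤ a) :
    IntervalIntegrable (fun u => 1 / (u * (u + 1) * log (1 + 1 / u) ^ 2)) volume 0 a := by
  refine intervalIntegral.intervalIntegrable_deriv_of_nonneg
    (continuousOn_invLogOneAddInv.mono ?_) (fun u hu => ?_) (fun u hu => ?_)
  · rw [uIcc_of_le ha]; exact Icc_subset_Ici_self
  · rw [min_eq_left ha] at hu; exact hasDerivAt_invLogOneAddInv hu.1
  · rw [min_eq_left ha] at hu; have := hu.1.le; positivity

lemma integral_deriv_invLogOneAddInv {a : ℝ} (ha : 0 ≤ a) :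
    ∫ u in 0..a, 1 / (u * (u + 1) * log (1 + 1 / u) ^ 2) = invLogOneAddInv a := by
  rw [intervalIntegral.integral_eq_sub_of_hasDerivAt_of_le ha
    (continuousOn_invLogOneAddInv.mono Icc_subset_Ici_self)
    (fun u hu => hasDerivAt_invLogOneAddInv hu.1) (intervalIntegrable_deriv_invLogOneAddInv ha)]
  simp [invLogOneAddInv]

lemma one_div_mul_log_sq_eq {u : ℝ} (hu : 0 ≤ u) :
    1 / (u * log (1 + 1 / u) ^ 2) = (u + 1) * (1 / (u * (u + 1) * log (1 + 1 / u) ^ 2)) := by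
  rw [mul_one_div, mul_right_comm, div_mul_cancel_right₀ (by positivity), one_div]

lemma integral_one_div_mul_log_sq_mem_Icc {a : ℝ} (ha : 0 ≤ a) :
    ∫ u in 0..a, 1 / (u * log (1 + 1 / u) ^ 2) ∈
      Icc (invLogOneAddInv a) ((1 + a) * invLogOneAddInv a) := by
  have hG := intervalIntegrable_deriv_invLogOneAddInv ha
  have hH := hG.continuousOn_mul (g := fun u => u + 1) (by fun_prop)
  rw [intervalIntegral.integral_congr fun u hu => one_div_mul_log_sq_eq (uIcc_of_le ha ▸ hu).1,
    ← integral_deriv_invLogOneAddInv ha]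
  constructor
  · refine intervalIntegral.integral_mono_on ha hG hH fun u hu => ?_
    have := hu.1
    exact le_mul_of_one_le_left (by positivity) (by linarith)
  · rw [← intervalIntegral.integral_const_mul]
    refine intervalIntegral.integral_mono_on ha hH (hG.const_mul _) fun u hu => ?_
    have := hu.1
    exact mul_le_mul_of_nonneg_right (by linarith [hu.2]) (by positivity)

lemma invLogOneAddInv_half_le {r : ℝ} (hr : 0 < r) :
    invLogOneAddInv (r / 2) ≤ invLogOneAddInv r := by
  unfold invLogOneAddInv
  refine inv_anti₀ (log_one_add_one_div_pos hr) (log_le_log (by positivity) ?_)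
  gcongr; linarith

lemma invLogOneAddInv_le_two_mul_half {r : ℝ} (hr : 0 < r) :
    invLogOneAddInv r ≤ 2 * invLogOneAddInv (r / 2) := by
  have hpos := log_one_add_one_div_pos (half_pos hr)
  have hlog : log (1 + 1 / (r / 2)) ≤ 2 * log (1 + 1 / r) := by
    calc log (1 + 1 / (r / 2)) ≤ log ((1 + 1 / r) ^ 2) := by
          refine log_le_log (by positivity) ?_
          field_simp
          nlinarith
      _ = 2 * log (1 + 1 / r) := by rw [log_pow, Nat.cast_ofNat]
  calc invLogOneAddInv r ≤ (log (1 + 1 / (r / 2)) / 2)⁻¹ :=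
        inv_anti₀ (by positivity) (by linarith)
    _ = 2 * invLogOneAddInv (r / 2) := by rw [inv_div, div_eq_mul_inv, invLogOneAddInv]

/-- `∫_r^{3r/2} dy/((y-r)·log²(1+1/(y-r))) ≈ 1/log(1+1/r)` for `r ∈ (0,1]`. -/
theorem integral_near_boundary_comp :
    ∃ c₁ > (0:ℝ), ∃ c₂ > (0:ℝ), ∀ r : ℝ, 0 < r → r ≤ 1 →
      c₁ * (Real.log (1 + 1/r))⁻¹ ≤
        (∫ y in r..(3*r/2), 1 / ((y - r) * (Real.log (1 + 1/(y - r)))^2)) ∧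
      (∫ y in r..(3*r/2), 1 / ((y - r) * (Real.log (1 + 1/(y - r)))^2)) ≤
        c₂ * (Real.log (1 + 1/r))⁻¹ := by
  refine ⟨1 / 2, by norm_num, 3 / 2, by norm_num, fun r hr hr1 => ?_⟩
  have hshift : ∫ y in r..(3*r/2), 1 / ((y - r) * (log (1 + 1/(y - r)))^2) =
      ∫ u in 0..r/2, 1 / (u * log (1 + 1 / u) ^ 2) := by
    rw [intervalIntegral.integral_comp_sub_right (fun u => 1 / (u * log (1 + 1 / u) ^ 2)),
      sub_self]
    ring_nf
  obtain ⟨hlower, hupper⟩ := integral_one_div_mul_log_sq_mem_Icc (half_pos hr).le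
  have hdouble := invLogOneAddInv_le_two_mul_half hr
  have hhalf := invLogOneAddInv_half_le hr
  have hhalf_pos := invLogOneAddInv_pos (half_pos hr)
  change 1 / 2 * invLogOneAddInv r ≤ _ ∧ _ ≤ 3 / 2 * invLogOneAddInv r
  rw [hshift]
  constructor
  · linarith
  · calc _ ≤ (1 + r / 2) * invLogOneAddInv (r / 2) := hupper
      _ ≤ 3 / 2 * invLogOneAddInv r := by gcongr; linarith
end

section
/- There exist constants c₁, c₂ > 0 such that for all 0 < z < x ≤ 1/2, c₁ · (log(1+1/z))^{-1/2} · log(1 + x/z) ≤ ∫₀^{x/2} (log(1 + 1/y))^{-1/2} / (y+z) dy ≤ c₂ · (log(1+1/z))^{-1/2} · log(1 + x/z). -/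
/-!
Write `S y = √(log (1 + 1/y))`, so that the integrand is `1 / (S y * (y + z))`. The function `S`
decreases, satisfies `S (y/4) ≤ 2 S y` (Bernoulli), and `-2 S` is an antiderivative of
`1 / (S u * u * (u + 1))`.

Lower bound: on `[z/4, x/2]` the integrand is at least `1 / (2 S z * (y + z))`, whose integral
is `log ((x/2 + z) / (5z/4)) / (2 S z)`, and for `z ≤ x` this logarithm is at least
`log (1 + x/z) / 4`.

Upper bound: replacing `S y` by the smaller `S (y + z)` and shifting leaves
`∫_z^b du / (S u * u)` with `b = z + x/2 ≤ 3/4`. This is at most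
`7/4 ∫_z^b du / (S u * u * (u + 1)) = 7/2 (S z - S b)`, and
`S z - S b ≤ ((S z)² - (S b)²) / S z ≤ log (b/z) / S z`.
-/

open MeasureTheory Real Set intervalIntegral

noncomputable def sqrtLogOneAddInv (y : ℝ) : ℝ := √(log (1 + 1 / y))

lemma rpow_neg_one_half_eq_inv_sqrt {t : ℝ} (ht : 0 ≤ t) : t ^ (-(1:ℝ)/2) = (√t)⁻¹ := by
  rw [neg_div, rpow_neg ht, sqrt_eq_rpow, one_div]

lemma sqrtLogOneAddInv_pos {y : ℝ} (hy : 0 < y) : 0 < sqrtLogOneAddInv y :=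
  sqrt_pos.2 (log_pos (by simp [hy]))

lemma sqrtLogOneAddInv_le {a b : ℝ} (ha : 0 < a) (hab : a ≤ b) :
    sqrtLogOneAddInv b ≤ sqrtLogOneAddInv a := by
  unfold sqrtLogOneAddInv
  gcongr
  have := one_div_pos.2 (ha.trans_le hab)
  linarith

lemma monotoneOn_inv_sqrtLogOneAddInv :
    MonotoneOn (fun y => (sqrtLogOneAddInv y)⁻¹) (Ici 0) := by
  intro a ha b _ hab
  rcases (mem_Ici.1 ha).eq_or_lt with rfl | ha
  -- `1 / 0 = 0` makes `sqrtLogOneAddInv 0 = 0`, hence `(sqrtLogOneAddInv 0)⁻¹ = 0`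
  · simp [sqrtLogOneAddInv, sqrt_nonneg]
  · exact inv_anti₀ (sqrtLogOneAddInv_pos (ha.trans_le hab)) (sqrtLogOneAddInv_le ha hab)

lemma log_one_add_mul_le (n : ℕ) {u : ℝ} (hu : 0 ≤ u) :
    log (1 + n * u) ≤ n * log (1 + u) := by
  rw [← log_pow]
  exact log_le_log (by positivity) (one_add_mul_le_pow (by linarith) n)

lemma sqrtLogOneAddInv_div_four_le {y : ℝ} (hy : 0 < y) :
    sqrtLogOneAddInv (y / 4) ≤ 2 * sqrtLogOneAddInv y := by
  have h := log_one_add_mul_le 4 (one_div_nonneg.2 hy.le)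
  rw [show (2 : ℝ) = √4 by norm_num, sqrtLogOneAddInv, sqrtLogOneAddInv,
    ← sqrt_mul (by norm_num)]
  refine sqrt_le_sqrt ?_
  convert h using 3
  · field_simp
    norm_num
  · norm_num

lemma hasDerivAt_sqrtLogOneAddInv {y : ℝ} (hy : 0 < y) :
    HasDerivAt sqrtLogOneAddInv (-(2 * (sqrtLogOneAddInv y * (y * (y + 1))))⁻¹) y := by
  have hlog : HasDerivAt (fun t => log (1 + 1 / t)) (-(y * (y + 1))⁻¹) y := by
    have h := (((hasDerivAt_inv hy.ne').const_add 1).log (by positivity))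
    convert h using 1 <;> [simp only [one_div]; field_simp]
  refine (hlog.sqrt (log_pos (by simp [hy])).ne').congr_deriv ?_
  rw [sqrtLogOneAddInv]
  field_simp

lemma continuousOn_inv_sqrtLogOneAddInv_mul :
    ContinuousOn (fun u => (sqrtLogOneAddInv u * (u * (u + 1)))⁻¹) (Ioi 0) := fun u hu =>
  (((hasDerivAt_sqrtLogOneAddInv hu).continuousAt.mul (by fun_prop)).inv₀ (mul_ne_zero
    (sqrtLogOneAddInv_pos hu).ne' (by simp only [mem_Ioi] at hu; positivity))).continuousWithinAt

lemma integral_inv_sqrtLogOneAddInv_mul {a b : ℝ} (ha : 0 < a) (hab : a ≤ b) :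
    ∫ u in a..b, (sqrtLogOneAddInv u * (u * (u + 1)))⁻¹ =
      2 * (sqrtLogOneAddInv a - sqrtLogOneAddInv b) := by
  have hsub : uIcc a b ⊆ Ioi 0 := fun u hu =>
    ha.trans_le (by rw [uIcc_of_le hab] at hu; exact hu.1)
  rw [integral_eq_sub_of_hasDerivAt (f := fun u => -2 * sqrtLogOneAddInv u)]
  · ring
  · intro u hu
    refine ((hasDerivAt_sqrtLogOneAddInv (hsub hu)).const_mul (-2)).congr_deriv ?_
    rw [mul_inv, neg_mul_neg, ← mul_assoc, mul_inv_cancel₀ two_ne_zero, one_mul]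
  · exact (continuousOn_inv_sqrtLogOneAddInv_mul.mono hsub).intervalIntegrable

lemma sqrtLogOneAddInv_sub_le {a b : ℝ} (ha : 0 < a) (hab : a ≤ b) :
    sqrtLogOneAddInv a - sqrtLogOneAddInv b ≤ (sqrtLogOneAddInv a)⁻¹ * log (b / a) := by
  have hb : 0 < b := ha.trans_le hab
  have hSa := sqrtLogOneAddInv_pos ha
  have hSb := (sqrtLogOneAddInv_pos hb).le
  have hSba := sqrtLogOneAddInv_le ha hab
  have hsq : sqrtLogOneAddInv a ^ 2 - sqrtLogOneAddInv b ^ 2 ≤ log (b / a) := by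
    simp only [sqrtLogOneAddInv]
    rw [sq_sqrt (log_nonneg (by simp [ha.le])), sq_sqrt (log_nonneg (by simp [hb.le])),
      ← log_div (by positivity) (by positivity)]
    refine log_le_log (by positivity) ?_
    rw [div_le_div_iff₀ (by positivity) ha]
    field_simp
    nlinarith
  rw [← div_eq_inv_mul, le_div_iff₀ hSa]
  nlinarith

lemma integral_inv_add {a b z : ℝ} (ha : 0 < a + z) (hb : 0 < b + z) :
    ∫ y in a..b, (y + z)⁻¹ = log ((b + z) / (a + z)) := by
  rw [integral_comp_add_right (fun y => y⁻¹), integral_inv_of_pos ha hb]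

lemma intervalIntegrable_inv_sqrtLogOneAddInv_div {a b z : ℝ} (ha : 0 ≤ a) (hb : 0 ≤ b)
    (hz : 0 < z) :
    IntervalIntegrable (fun y => (sqrtLogOneAddInv y)⁻¹ / (y + z)) volume a b := by
  have hsub : uIcc a b ⊆ Ici 0 := fun y hy => le_min ha hb |>.trans hy.1
  simp only [div_eq_mul_inv]
  refine (monotoneOn_inv_sqrtLogOneAddInv.mono hsub).intervalIntegrable.mul_continuousOn ?_
  exact fun y hy => ((continuous_add_const z).continuousAt.inv₀
    (by have : (0:ℝ) ≤ y := hsub hy; positivity)).continuousWithinAt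

lemma inv_two_mul_log_le_integral {b z : ℝ} (hz : 0 < z) (hb : z / 4 ≤ b) :
    (2 * sqrtLogOneAddInv z)⁻¹ * log ((b + z) / (z / 4 + z)) ≤
      ∫ y in 0..b, (sqrtLogOneAddInv y)⁻¹ / (y + z) := by
  have hz4 : 0 < z / 4 := by positivity
  calc (2 * sqrtLogOneAddInv z)⁻¹ * log ((b + z) / (z / 4 + z))
      = ∫ y in z / 4..b, (2 * sqrtLogOneAddInv z)⁻¹ * (y + z)⁻¹ := by
        rw [intervalIntegral.integral_const_mul, integral_inv_add (by positivity) (by linarith)]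
    _ ≤ ∫ y in z / 4..b, (sqrtLogOneAddInv y)⁻¹ / (y + z) := by
        refine integral_mono_on hb ?_
          (intervalIntegrable_inv_sqrtLogOneAddInv_div hz4.le (hz4.le.trans hb) hz) fun y hy => ?_
        · exact ((continuous_add_const z).continuousOn.inv₀ fun y hy => by
            have : z / 4 ≤ y := by rw [uIcc_of_le hb] at hy; exact hy.1
            linarith).intervalIntegrable.const_mul _
        · rw [← div_eq_mul_inv]
          refine div_le_div_of_nonneg_right ?_ (by linarith [hy.1])
          calc (2 * sqrtLogOneAddInv z)⁻¹ ≤ (sqrtLogOneAddInv (z / 4))⁻¹ :=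
                inv_anti₀ (sqrtLogOneAddInv_pos hz4) (sqrtLogOneAddInv_div_four_le hz)
            _ ≤ (sqrtLogOneAddInv y)⁻¹ :=
                monotoneOn_inv_sqrtLogOneAddInv hz4.le (hz4.le.trans hy.1) hy.1
    _ ≤ ∫ y in 0..b, (sqrtLogOneAddInv y)⁻¹ / (y + z) := by
        refine integral_mono_interval hz4.le hb le_rfl ?_
          (intervalIntegrable_inv_sqrtLogOneAddInv_div le_rfl (hz4.le.trans hb) hz)
        refine (ae_restrict_iff' measurableSet_Ioc).2 (Filter.Eventually.of_forall fun y hy => ?_)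
        have := (sqrtLogOneAddInv_pos hy.1).le
        have := hy.1
        positivity

lemma integral_inv_sqrtLogOneAddInv_div_le {b z : ℝ} (hb : 0 ≤ b) (hz : 0 < z) :
    ∫ y in 0..b, (sqrtLogOneAddInv y)⁻¹ / (y + z) ≤
      2 * (1 + z + b) * ((sqrtLogOneAddInv z)⁻¹ * log (1 + b / z)) := by
  have hcont : ContinuousOn (fun y => (sqrtLogOneAddInv (y + z) * ((y + z) * (y + z + 1)))⁻¹)
      (uIcc 0 b) :=
    continuousOn_inv_sqrtLogOneAddInv_mul.comp (continuous_add_const z).continuousOn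
      fun y hy => by
        have : 0 ≤ y := by rw [uIcc_of_le hb] at hy; exact hy.1
        simp only [mem_Ioi]; positivity
  calc ∫ y in 0..b, (sqrtLogOneAddInv y)⁻¹ / (y + z)
      ≤ ∫ y in 0..b,
          (1 + z + b) * (sqrtLogOneAddInv (y + z) * ((y + z) * (y + z + 1)))⁻¹ := by
        refine integral_mono_on hb (intervalIntegrable_inv_sqrtLogOneAddInv_div le_rfl hb hz)
          (hcont.intervalIntegrable.const_mul _) fun y hy => ?_
        have hyz : 0 < y + z := by linarith [hy.1]
        have hS := sqrtLogOneAddInv_pos hyz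
        calc (sqrtLogOneAddInv y)⁻¹ / (y + z) ≤ (sqrtLogOneAddInv (y + z))⁻¹ / (y + z) :=
              div_le_div_of_nonneg_right
                (monotoneOn_inv_sqrtLogOneAddInv hy.1 hyz.le (by linarith)) hyz.le
          _ = (1 + y + z) * (sqrtLogOneAddInv (y + z) * ((y + z) * (y + z + 1)))⁻¹ := by
              field_simp
              ring
          _ ≤ (1 + z + b) * (sqrtLogOneAddInv (y + z) * ((y + z) * (y + z + 1)))⁻¹ :=
              mul_le_mul_of_nonneg_right (by linarith [hy.2]) (by positivity)
    _ = (1 + z + b) * (2 * (sqrtLogOneAddInv z - sqrtLogOneAddInv (b + z))) := by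
        rw [intervalIntegral.integral_const_mul, integral_comp_add_right
          (fun u => (sqrtLogOneAddInv u * (u * (u + 1)))⁻¹), zero_add,
          integral_inv_sqrtLogOneAddInv_mul hz (by linarith)]
    _ ≤ (1 + z + b) * (2 * ((sqrtLogOneAddInv z)⁻¹ * log ((b + z) / z))) := by
        gcongr
        exact sqrtLogOneAddInv_sub_le hz (by linarith)
    _ = 2 * (1 + z + b) * ((sqrtLogOneAddInv z)⁻¹ * log (1 + b / z)) := by
        rw [add_div, div_self hz.ne', add_comm (b / z)]
        ring

lemma log_one_add_div_le {x z : ℝ} (hz : 0 < z) (hzx : z ≤ x) :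
    log (1 + x / z) ≤ 4 * log ((x / 2 + z) / (z / 4 + z)) := by
  have ht : 1 ≤ x / z := (one_le_div hz).2 hzx
  have hq : (x / 2 + z) / (z / 4 + z) = (2 * (x / z) + 4) / 5 := by
    field_simp
    ring
  rw [hq, ← Nat.cast_ofNat, ← log_pow]
  refine log_le_log (by positivity) ?_
  generalize x / z = t at ht
  nlinarith [sq_nonneg (t - 1), sq_nonneg (t + 2), mul_nonneg (sub_nonneg.2 ht) (sq_nonneg (t + 2))]

/-- `∫₀^{x/2} (log(1+1/y))^{-1/2}/(y+z) dy ≈ (log(1+1/z))^{-1/2}·log(1+x/z)`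
for `0 < z < x ≤ 1/2`. -/
theorem integral_I1_comp :
    ∃ c₁ > (0:ℝ), ∃ c₂ > (0:ℝ), ∀ z x : ℝ, 0 < z → z < x → x ≤ 1/2 →
      c₁ * ((Real.log (1 + 1/z)) ^ (-(1:ℝ)/2) * Real.log (1 + x/z)) ≤
        (∫ y in (0:ℝ)..(x/2), (Real.log (1 + 1/y)) ^ (-(1:ℝ)/2) / (y + z)) ∧
      (∫ y in (0:ℝ)..(x/2), (Real.log (1 + 1/y)) ^ (-(1:ℝ)/2) / (y + z)) ≤
        c₂ * ((Real.log (1 + 1/z)) ^ (-(1:ℝ)/2) * Real.log (1 + x/z)) := by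
  refine ⟨1 / 8, by norm_num, 7 / 2, by norm_num, fun z x hz hzx hx => ?_⟩
  have hV : ∀ y : ℝ, 0 ≤ y → log (1 + 1 / y) ^ (-(1:ℝ) / 2) = (sqrtLogOneAddInv y)⁻¹ :=
    fun y hy => rpow_neg_one_half_eq_inv_sqrt
      (log_nonneg (by simp only [le_add_iff_nonneg_right]; positivity))
  have hx0 : 0 ≤ x / 2 := by linarith
  have hI : ∫ y in (0:ℝ)..(x / 2), log (1 + 1 / y) ^ (-(1:ℝ) / 2) / (y + z) =
      ∫ y in (0:ℝ)..(x / 2), (sqrtLogOneAddInv y)⁻¹ / (y + z) :=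
    integral_congr fun y hy => by rw [hV y (by rw [uIcc_of_le hx0] at hy; exact hy.1)]
  rw [hI, hV z hz.le]
  have hSz := (inv_pos.2 (sqrtLogOneAddInv_pos hz)).le
  constructor
  · calc 1 / 8 * ((sqrtLogOneAddInv z)⁻¹ * log (1 + x / z))
        ≤ (2 * sqrtLogOneAddInv z)⁻¹ * log ((x / 2 + z) / (z / 4 + z)) := by
          rw [mul_inv]
          nlinarith [mul_le_mul_of_nonneg_left (log_one_add_div_le hz hzx.le) hSz]
      _ ≤ _ := inv_two_mul_log_le_integral hz (by linarith)
  · calc _ ≤ 2 * (1 + z + x / 2) * ((sqrtLogOneAddInv z)⁻¹ * log (1 + x / 2 / z)) :=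
          integral_inv_sqrtLogOneAddInv_div_le hx0 hz
      _ ≤ 7 / 2 * ((sqrtLogOneAddInv z)⁻¹ * log (1 + x / z)) := by
          gcongr
          · exact mul_nonneg hSz (log_nonneg (by simp only [le_add_iff_nonneg_right]; positivity))
          all_goals linarith
end

section
/- There exist constants c₁, c₂ > 0 such that for all z ≤ −1 and 0 < x ≤ 1 and 0 < α < 2: c₁·|z|^{-(1+α/2)} ≤ ∫₂^∞ u^{α/2 −1} / (u + |z|)^{1+α} du ≤ c₂·|z|^{-(1+α/2)}. -/
open MeasureTheory Set Real

/-! Substituting `u = |z| t` turns the integral into `|z| ^ (-(1 + α/2))` times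
`∫_{2/|z|}^∞ t^{α/2-1}/(1+t)^{1+α} dt`, and since `0 < 2/|z| ≤ 2` this lies between the
integrals of the same function over `(2, ∞)` and `(0, ∞)`, both finite and positive because the
integrand is `~ t^{α/2-1}` at `0` and `~ t^{-(2+α/2)}` at `∞`. -/

lemma integrableOn_rpow_div_one_add_rpow_Ioi_zero {a b : ℝ} (ha : -1 < a) (hab : a + 1 < b) :
    IntegrableOn (fun t : ℝ => t ^ a / (1 + t) ^ b) (Ioi 0) := by
  have hmeas : AEStronglyMeasurable (fun t : ℝ => t ^ a / (1 + t) ^ b) :=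
    (by fun_prop : Measurable fun t : ℝ => t ^ a / (1 + t) ^ b).aestronglyMeasurable
  rw [← Ioc_union_Ioi_eq_Ioi zero_le_one, integrableOn_union]
  constructor
  · have hdom : IntegrableOn (fun t : ℝ => t ^ a) (Ioc 0 1) :=
      (intervalIntegrable_iff_integrableOn_Ioc_of_le zero_le_one).mp
        (intervalIntegral.intervalIntegrable_rpow' ha)
    refine hdom.mono' hmeas.restrict (ae_restrict_of_forall_mem measurableSet_Ioc fun t ht => ?_)
    have ht0 : 0 < t := ht.1
    rw [norm_of_nonneg (by positivity)]
    exact div_le_self (by positivity) (one_le_rpow (by linarith) (by linarith))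
  · have hdom : IntegrableOn (fun t : ℝ => t ^ (a - b)) (Ioi 1) :=
      integrableOn_Ioi_rpow_of_lt (by linarith) one_pos
    refine hdom.mono' hmeas.restrict (ae_restrict_of_forall_mem measurableSet_Ioi fun t ht => ?_)
    have ht0 : 0 < t := zero_lt_one.trans ht
    rw [norm_of_nonneg (by positivity), rpow_sub ht0]
    gcongr <;> linarith

lemma setIntegral_Ioi_pos {f : ℝ → ℝ} {c : ℝ} (hf : IntegrableOn f (Ioi c))
    (hpos : ∀ t ∈ Ioi c, 0 < f t) : 0 < ∫ t in Ioi c, f t := by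
  rw [setIntegral_pos_iff_support_of_nonneg_ae
    (ae_restrict_of_forall_mem measurableSet_Ioi fun t ht => (hpos t ht).le) hf]
  have hsupp : Ioi c ⊆ Function.support f ∩ Ioi c := fun t ht => ⟨(hpos t ht).ne', ht⟩
  exact (measure_mono hsupp).trans_lt' (by simp)

lemma setIntegral_Ioi_anti {f : ℝ → ℝ} {c : ℝ} (hf : IntegrableOn f (Ioi c))
    (hf0 : ∀ t ∈ Ioi c, 0 ≤ f t) {s s' : ℝ} (hs : c ≤ s) (hss' : s ≤ s') :
    ∫ t in Ioi s', f t ≤ ∫ t in Ioi s, f t :=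
  setIntegral_mono_set (hf.mono_set (Ioi_subset_Ioi hs))
    (ae_restrict_of_forall_mem measurableSet_Ioi fun t ht => hf0 t (lt_of_le_of_lt hs ht))
    (Ioi_subset_Ioi hss').eventuallyLE

lemma setIntegral_rpow_div_add_rpow_Ioi {a b c r : ℝ} (hc : 0 ≤ c) (hr : 0 < r) :
    ∫ u in Ioi c, u ^ a / (u + r) ^ b =
      r ^ (a + 1 - b) * ∫ t in Ioi (c / r), t ^ a / (1 + t) ^ b := by
  have hscale : ∀ t ∈ Ioi (c / r),
      (r * t) ^ a / (r * t + r) ^ b = r ^ (a - b) * (t ^ a / (1 + t) ^ b) := by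
    intro t ht
    have ht0 : 0 < t := (div_nonneg hc hr.le).trans_lt ht
    rw [show r * t + r = r * (1 + t) by ring, mul_rpow hr.le ht0.le, mul_rpow hr.le (by linarith),
      rpow_sub hr]
    ring
  have hsubst := integral_comp_mul_left_Ioi' (fun u => u ^ a / (u + r) ^ b) (c / r) hr
  rw [mul_div_cancel₀ c hr.ne'] at hsubst
  rw [← hsubst, setIntegral_congr_fun measurableSet_Ioi hscale, integral_const_mul, smul_eq_mul,
    ← mul_assoc, add_sub_right_comm, rpow_add_one hr.ne', mul_comm r]

theorem integral_poisson_case3_comp_general (α : ℝ) (hα : 0 < α) :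
    ∃ c₁ > (0:ℝ), ∃ c₂ > (0:ℝ), ∀ z x : ℝ, z ≤ -1 → 0 < x → x ≤ 1 →
      c₁ * |z| ^ (-(1 + α/2)) ≤
        (∫ u in Set.Ioi (2:ℝ), u ^ (α/2 - 1) / (u + |z|) ^ (1 + α)) ∧
      (∫ u in Set.Ioi (2:ℝ), u ^ (α/2 - 1) / (u + |z|) ^ (1 + α)) ≤
        c₂ * |z| ^ (-(1 + α/2)) := by
  set h : ℝ → ℝ := fun t => t ^ (α/2 - 1) / (1 + t) ^ (1 + α)
  have hint : IntegrableOn h (Ioi 0) :=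
    integrableOn_rpow_div_one_add_rpow_Ioi_zero (by linarith) (by linarith)
  have hpos : ∀ t ∈ Ioi (0:ℝ), 0 < h t := fun t (ht : 0 < t) => by positivity
  have hpos₂ : ∀ t ∈ Ioi (2:ℝ), 0 < h t := fun t (ht : 2 < t) => hpos t (two_pos.trans ht)
  refine ⟨_, setIntegral_Ioi_pos (hint.mono_set (Ioi_subset_Ioi zero_le_two)) hpos₂,
    _, setIntegral_Ioi_pos hint hpos, fun z _ hz _ _ => ?_⟩
  have hz1 : 1 ≤ |z| := by rw [abs_of_neg (by linarith)]; linarith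
  have hzpos : 0 < |z| := one_pos.trans_le hz1
  have hnonneg : ∀ t ∈ Ioi (0:ℝ), 0 ≤ h t := fun t ht => (hpos t ht).le
  rw [setIntegral_rpow_div_add_rpow_Ioi zero_le_two hzpos,
    show α/2 - 1 + 1 - (1 + α) = -(1 + α/2) by ring, mul_comm _ (|z| ^ _), mul_comm _ (|z| ^ _)]
  have hzpow : 0 ≤ |z| ^ (-(1 + α/2)) := by positivity
  exact ⟨mul_le_mul_of_nonneg_left
      (setIntegral_Ioi_anti hint hnonneg (by positivity) (div_le_self zero_le_two hz1)) hzpow,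
    mul_le_mul_of_nonneg_left (setIntegral_Ioi_anti hint hnonneg le_rfl (by positivity)) hzpow⟩

/-- `∫₂^∞ u^{α/2-1}/(u+|z|)^{1+α} du ≈ |z|^{-(1+α/2)}` for `z ≤ -1`,
`0 < x ≤ 1` and `0 < α < 2`. -/
theorem integral_poisson_case3_comp (α : ℝ) (hα : 0 < α) (hα2 : α < 2) :
    ∃ c₁ > (0:ℝ), ∃ c₂ > (0:ℝ), ∀ z x : ℝ, z ≤ -1 → 0 < x → x ≤ 1 →
      c₁ * |z| ^ (-(1 + α/2)) ≤
        (∫ u in Set.Ioi (2:ℝ), u ^ (α/2 - 1) / (u + |z|) ^ (1 + α)) ∧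
      (∫ u in Set.Ioi (2:ℝ), u ^ (α/2 - 1) / (u + |z|) ^ (1 + α)) ≤
        c₂ * |z| ^ (-(1 + α/2)) :=
  integral_poisson_case3_comp_general α hα
end
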